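/- Let z ∈ ℂ and let G : ℤ² → ℂ satisfy (Δ_d + z) G(x) = δ_{x,0} for all x ∈ ℤ², where δ_{x,0} equals 1 if x = (0,0) and 0 otherwise. Let R be a finite region in ℤ² and let u : R → ℂ satisfy the discrete Helmholtz equation (Δ_d + z) u(x) = 0 for all x ∈ R̊. Then for every x ∈ R̊, u(x) = Σ_{j=1}^{6} Σ_{y∈(∂R)_j} [ u(y) (G(x−y) − G(x−y+e_j)) − G(x−y) (u(y) − u(y−e_j)) ]. -/
import Mathlib


/-- The six lattice directions `e₁, e₂, e₃ = e₁ − e₂, e₄ = −e₁, e₅ = −e₂, e₆ = −e₃`. -/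
def dir : Fin 6 → ℤ × ℤ := ![(1, 0), (0, 1), (1, -1), (-1, 0), (0, -1), (-1, 1)]

/-- The neighbourhood `F_x = {x, x±e₁, x±e₂, x±(e₁−e₂)}` of a lattice point. -/
def nbhd (x : ℤ × ℤ) : Finset (ℤ × ℤ) :=
  insert x (Finset.image (fun j => x + dir j) Finset.univ)

/-- A finite region in `ℤ²`: a finite set `R` with a distinguished interior `R̊ ⊆ R`
such that `F_x ⊆ R` for every interior point `x`, and `R = ⋃_{x ∈ R̊} F_x`. -/
structure FiniteRegion where
  carrier : Finset (ℤ × ℤ)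
  interior : Finset (ℤ × ℤ)
  interior_subset : interior ⊆ carrier
  nbhd_subset : ∀ x ∈ interior, nbhd x ⊆ carrier
  cover : ∀ y ∈ carrier, ∃ x ∈ interior, y ∈ nbhd x

/-- The boundary `∂R = R \ R̊`. -/
def FiniteRegion.boundary (R : FiniteRegion) : Finset (ℤ × ℤ) :=
  R.carrier \ R.interior

/-- The `j`-th side of the boundary: `(∂R)_j = {y ∈ ∂R : y − e_j ∈ R̊}`. -/
def FiniteRegion.side (R : FiniteRegion) (j : Fin 6) : Finset (ℤ × ℤ) :=
  R.boundary.filter (fun y => y - dir j ∈ R.interior)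

/-- The discrete Laplacian of the two-dimensional triangular lattice. -/
noncomputable def discLap (u : ℤ × ℤ → ℂ) (x : ℤ × ℤ) : ℂ :=
  u (x + (1, 0)) + u (x - (1, 0)) + u (x + (0, 1)) + u (x - (0, 1)) +
    u (x + (1, -1)) + u (x - (1, -1)) - 6 * u x


lemma dir_add_three : ∀ j : Fin 6, dir (j + 3) = -dir j := by decide

lemma mem_nbhd_add (y : ℤ × ℤ) (j : Fin 6) : y + dir j ∈ nbhd y :=
  Finset.mem_insert_of_mem (Finset.mem_image.mpr ⟨j, Finset.mem_univ j, rfl⟩)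

lemma dir0 : dir 0 = (1, 0) := rfl
lemma dir1 : dir 1 = (0, 1) := rfl
lemma dir2 : dir 2 = (1, -1) := rfl
lemma dir3 : dir 3 = (-1, 0) := rfl
lemma dir4 : dir 4 = (0, -1) := rfl
lemma dir5 : dir 5 = (-1, 1) := rfl

lemma neg1 : ((-1, 0) : ℤ × ℤ) = -(1, 0) := by decide
lemma neg2 : ((0, -1) : ℤ × ℤ) = -(0, 1) := by decide
lemma neg3 : ((-1, 1) : ℤ × ℤ) = -(1, -1) := by decide

theorem greens_representation_formula_homogeneous (z : ℂ) (G : ℤ × ℤ → ℂ)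
    (hG : ∀ x : ℤ × ℤ, discLap G x + z * G x = (if x = (0, 0) then 1 else 0))
    (R : FiniteRegion) (u : ℤ × ℤ → ℂ)
    (hu : ∀ x ∈ R.interior, discLap u x + z * u x = 0) :
    ∀ x ∈ R.interior,
      u x =
        ∑ j : Fin 6, ∑ y ∈ R.side j,
          (u y * (G (x - y) - G (x - y + dir j)) - G (x - y) * (u y - u (y - dir j))) := by
  intro x hx
  set v : ℤ × ℤ → ℂ := fun y => G (x - y) with hv_def
  have hv : ∀ y, discLap v y + z * v y = if y = x then 1 else 0 := by
    intro y
    have h1 : discLap v y = discLap G (x - y) := by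
      simp only [discLap, hv_def]
      ring_nf
    have h2 : (v y : ℂ) = G (x - y) := rfl
    rw [h1, h2, hG (x - y)]
    congr 1
    simp only [eq_iff_iff]
    constructor
    · intro h
      have h' : x - y = 0 := h
      exact (sub_eq_zero.mp h').symm
    · intro h; rw [h]; show x - x = (0, 0); rw [sub_self]; rfl
  set f : ℤ × ℤ → ℤ × ℤ → ℂ := fun a b => u a * v b - v a * u b with hf_def
  have key : u x = ∑ y ∈ R.interior, ∑ j : Fin 6, f y (y + dir j) := by
    have e1 : ∑ y ∈ R.interior,
        (u y * (discLap v y + z * v y) - v y * (discLap u y + z * u y)) = u x := by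
      rw [Finset.sum_congr rfl (fun y hy => by rw [hv y, hu y hy])]
      simp only [mul_zero, sub_zero, mul_ite, mul_one]
      rw [Finset.sum_ite_eq' R.interior x u]
      simp [hx]
    rw [← e1]
    apply Finset.sum_congr rfl
    intro y _
    simp only [hf_def, discLap, Fin.sum_univ_six, dir0, dir1, dir2, dir3, dir4, dir5,
      neg1, neg2, neg3]
    simp only [sub_eq_add_neg]
    ring
  rw [key, Finset.sum_comm]
  have split : ∀ j : Fin 6,
      ∑ y ∈ R.interior, f y (y + dir j) =
        (∑ y ∈ R.interior.filter (fun y => y + dir j ∈ R.interior), f y (y + dir j)) +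
        ∑ y ∈ R.interior.filter (fun y => y + dir j ∉ R.interior), f y (y + dir j) :=
    fun j => (Finset.sum_filter_add_sum_filter_not _ _ _).symm
  have cancel : ∑ j : Fin 6,
      ∑ y ∈ R.interior.filter (fun y => y + dir j ∈ R.interior), f y (y + dir j) = 0 := by
    set g : Fin 6 → ℂ := fun j =>
      ∑ y ∈ R.interior.filter (fun y => y + dir j ∈ R.interior), f y (y + dir j) with hg
    have hneg : ∀ j, g (j + 3) = -g j := by
      intro j
      rw [hg]
      simp only
      rw [← Finset.sum_neg_distrib]
      refine Finset.sum_nbij' (fun y => y + dir (j + 3)) (fun y => y + dir j) ?_ ?_ ?_ ?_ ?_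
      · intro a ha
        simp only [Finset.mem_filter, dir_add_three] at ha ⊢
        exact ⟨ha.2, by rw [show a + -dir j + dir j = a by ring]; exact ha.1⟩
      · intro a ha
        simp only [Finset.mem_filter, dir_add_three] at ha ⊢
        exact ⟨ha.2, by rw [show a + dir j + -dir j = a by ring]; exact ha.1⟩
      · intro a _; show a + dir (j + 3) + dir j = a; rw [dir_add_three]; ring
      · intro a _; show a + dir j + dir (j + 3) = a; rw [dir_add_three]; ring
      · intro a _
        rw [dir_add_three, show a + -dir j + dir j = a by ring, hf_def]
        ring
    have hsum : ∑ j : Fin 6, g (j + 3) = ∑ j : Fin 6, g j :=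
      Fintype.sum_bijective (· + (3 : Fin 6)) (Equiv.addRight (3 : Fin 6)).bijective
        (fun j => g (j + 3)) g (fun j => rfl)
    have hS : ∑ j : Fin 6, g j = -∑ j : Fin 6, g j := by
      conv_lhs => rw [← hsum]
      rw [Finset.sum_congr rfl (fun j _ => hneg j), Finset.sum_neg_distrib]
    have h0 : ∑ j : Fin 6, g j + ∑ j : Fin 6, g j = 0 := by
      nth_rewrite 1 [hS]; ring
    exact add_self_eq_zero.mp h0
  have bdry : ∀ j : Fin 6,
      ∑ y ∈ R.interior.filter (fun y => y + dir j ∉ R.interior), f y (y + dir j) =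
        ∑ y ∈ R.side j,
          (u y * (G (x - y) - G (x - y + dir j)) - G (x - y) * (u y - u (y - dir j))) := by
    intro j
    refine Finset.sum_nbij' (fun y => y + dir j) (fun y => y - dir j) ?_ ?_ ?_ ?_ ?_
    · intro a ha
      simp only [Finset.mem_filter] at ha
      simp only [FiniteRegion.side, FiniteRegion.boundary, Finset.mem_filter,
        Finset.mem_sdiff]
      refine ⟨⟨R.nbhd_subset a ha.1 (mem_nbhd_add a j), ha.2⟩, ?_⟩
      rw [show a + dir j - dir j = a by ring]; exact ha.1
    · intro a ha
      simp only [FiniteRegion.side, FiniteRegion.boundary, Finset.mem_filter,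
        Finset.mem_sdiff] at ha
      simp only [Finset.mem_filter]
      refine ⟨ha.2, ?_⟩
      rw [show a - dir j + dir j = a by ring]; exact ha.1.2
    · intro a _; show a + dir j - dir j = a; ring
    · intro a _; show a - dir j + dir j = a; ring
    · intro a _
      have e1 : x - (a + dir j) + dir j = x - a := by ring
      have e2 : a + dir j - dir j = a := by ring
      show u a * v (a + dir j) - v a * u (a + dir j) = _
      simp only [hv_def]
      rw [e1, e2]
      ring
  calc ∑ j : Fin 6, ∑ y ∈ R.interior, f y (y + dir j)
      = ∑ j : Fin 6,
          ((∑ y ∈ R.interior.filter (fun y => y + dir j ∈ R.interior), f y (y + dir j)) +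
            ∑ y ∈ R.interior.filter (fun y => y + dir j ∉ R.interior), f y (y + dir j)) :=
        Finset.sum_congr rfl (fun j _ => split j)
    _ = (∑ j : Fin 6,
          ∑ y ∈ R.interior.filter (fun y => y + dir j ∈ R.interior), f y (y + dir j)) +
        ∑ j : Fin 6,
          ∑ y ∈ R.interior.filter (fun y => y + dir j ∉ R.interior), f y (y + dir j) :=
        Finset.sum_add_distrib
    _ = ∑ j : Fin 6,
          ∑ y ∈ R.interior.filter (fun y => y + dir j ∉ R.interior), f y (y + dir j) := by
        rw [cancel, zero_add]
    _ = _ := Finset.sum_congr rfl (fun j _ => bdry j)
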